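/- The volume of the region {(x₁,…,x₅) ∈ [0,1]⁵ : 0 ≤ x₁ + x₂ + x₃ − x₄ − x₅ ≤ 1} equals 11/20. -/

import Mathlib

/-!
Reflecting `x₃ ↦ 1 - x₃`, `x₄ ↦ 1 - x₄` preserves the unit cube and Lebesgue measure and turns
the region into `{x ∈ [0,1]⁵ : 2 ≤ ∑ xᵢ ≤ 3}`. Its volume is `F₅(3) - F₅(2)`, where
`Fₙ(t) = vol {x ∈ [0,1]ⁿ : ∑ xᵢ ≤ t} = ∑ₖ (-1)ᵏ C(n,k) (t - k)₊ⁿ / n!` is the Irwin–Hall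
distribution function (the hyperplane `∑ xᵢ = 2` is null). The closed form follows by induction
on `n` from Fubini, `Fₙ₊₁(t) = ∫₀¹ Fₙ(t - a) da`, since integrating `(t - k)₊ⁿ` and applying
Pascal's rule reproduces the formula one dimension up.
-/

open MeasureTheory Set
open scoped Nat

/-- `t₊ⁿ`; for `n = 0` this is the indicator of `[0, ∞)`, which makes the Irwin–Hall formula
valid in dimension `0`. -/
noncomputable def truncPow (n : ℕ) (t : ℝ) : ℝ := if 0 ≤ t then t ^ n else 0

lemma truncPow_nonneg (n : ℕ) (t : ℝ) : 0 ≤ truncPow n t := by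
  unfold truncPow
  split_ifs
  · positivity
  · exact le_rfl

lemma monotone_truncPow (n : ℕ) : Monotone (truncPow n) := by
  intro s t hst
  unfold truncPow
  split_ifs with hs ht ht
  · exact pow_le_pow_left₀ hs hst n
  · exact absurd (hs.trans hst) ht
  · positivity
  · exact le_rfl

lemma continuous_truncPow_succ (n : ℕ) : Continuous (truncPow (n + 1)) := by
  have : truncPow (n + 1) = fun t => max t 0 ^ (n + 1) := by
    funext t
    unfold truncPow
    split_ifs with h
    · rw [max_eq_left h]
    · rw [max_eq_right (not_le.1 h).le, zero_pow n.succ_ne_zero]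
  rw [this]
  fun_prop

-- Only a right derivative: `truncPow 0` jumps at `0`.
lemma hasDerivWithinAt_truncPow_succ (n : ℕ) (x : ℝ) :
    HasDerivWithinAt (truncPow (n + 1)) ((n + 1) * truncPow n x) (Ioi x) x := by
  rcases lt_or_ge x 0 with hx | hx
  · have hzero : truncPow (n + 1) =ᶠ[nhds x] fun _ => 0 :=
      (eventually_lt_nhds hx).mono fun t ht => if_neg (not_le.2 ht)
    simpa [truncPow, not_le.2 hx] using
      ((hasDerivAt_const x (0 : ℝ)).congr_of_eventuallyEq hzero).hasDerivWithinAt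
  · have hpow := (hasDerivAt_pow (n + 1) x).hasDerivWithinAt (s := Ioi x)
    refine (hpow.congr (fun t ht => if_pos (hx.trans (le_of_lt ht))) (if_pos hx)).congr_deriv ?_
    simp [truncPow, hx]

lemma integral_truncPow (n : ℕ) (a b : ℝ) :
    ∫ x in a..b, truncPow n x = (truncPow (n + 1) b - truncPow (n + 1) a) / (n + 1) := by
  have hderiv : ∀ x, HasDerivWithinAt (fun t => truncPow (n + 1) t / (n + 1)) (truncPow n x)
      (Ioi x) x := fun x =>
    (hasDerivWithinAt_truncPow_succ n x).div_const ((n : ℝ) + 1) |>.congr_deriv (by field_simp)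
  rw [intervalIntegral.integral_eq_sub_of_hasDeriv_right
    ((continuous_truncPow_succ n).div_const _).continuousOn (fun x _ => hderiv x)
    (monotone_truncPow n).intervalIntegrable, sub_div]

lemma intervalIntegrable_truncPow_sub (n : ℕ) (c a b : ℝ) :
    IntervalIntegrable (fun x => truncPow n (x - c)) volume a b :=
  Monotone.intervalIntegrable fun _ _ h => monotone_truncPow n (sub_le_sub_right h c)

lemma sum_range_choose_mul_sub {R : Type*} [CommRing R] (n : ℕ) (g : ℕ → R) :
    ∑ k ∈ Finset.range (n + 1), (-1) ^ k * n.choose k * (g k - g (k + 1)) =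
      ∑ k ∈ Finset.range (n + 2), (-1) ^ k * (n + 1).choose k * g k := by
  have hshift : ∑ k ∈ Finset.range (n + 1), (-1) ^ k * (n.choose k : R) * g k =
      g 0 - ∑ k ∈ Finset.range (n + 1), (-1) ^ k * (n.choose (k + 1) : R) * g (k + 1) := by
    rw [← add_zero (∑ k ∈ Finset.range (n + 1), _),
      ← show (-1) ^ (n + 1) * (n.choose (n + 1) : R) * g (n + 1) = 0 by simp,
      ← Finset.sum_range_succ, Finset.sum_range_succ']
    simp only [pow_succ, pow_zero, mul_neg, mul_one, neg_mul, one_mul, Finset.sum_neg_distrib,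
      Nat.choose_zero_right, Nat.cast_one]
    ring
  rw [Finset.sum_range_succ' _ (n + 1)]
  simp only [Nat.choose_succ_succ, Nat.cast_add, mul_sub, Finset.sum_sub_distrib, hshift]
  simp only [pow_succ, pow_zero, mul_neg, mul_one, neg_mul, one_mul, mul_add, add_mul,
    Finset.sum_add_distrib, Finset.sum_neg_distrib, Nat.choose_zero_right, Nat.cast_one]
  ring

noncomputable def cubeSumCDF (n : ℕ) (t : ℝ) : ℝ :=
  (∑ k ∈ Finset.range (n + 1), (-1) ^ k * n.choose k * truncPow n (t - k)) / n !

lemma intervalIntegrable_cubeSumCDF (n : ℕ) (a b : ℝ) :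
    IntervalIntegrable (cubeSumCDF n) volume a b := by
  have := IntervalIntegrable.sum (Finset.range (n + 1)) fun k _ =>
    (intervalIntegrable_truncPow_sub n k a b).const_mul ((-1) ^ k * (n.choose k : ℝ))
  rw [Finset.sum_fn] at this
  exact this.div_const _

lemma integral_cubeSumCDF_sub (n : ℕ) (t : ℝ) :
    ∫ a in (0 : ℝ)..1, cubeSumCDF n (t - a) = cubeSumCDF (n + 1) t := by
  have hterm : ∀ k : ℕ, ∫ s in t - 1..t, truncPow n (s - k) =
      (truncPow (n + 1) (t - k) - truncPow (n + 1) (t - (k + 1 : ℕ))) / (n + 1) := fun k => by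
    rw [intervalIntegral.integral_comp_sub_right, integral_truncPow]
    push_cast
    ring_nf
  rw [intervalIntegral.integral_comp_sub_left (cubeSumCDF n), sub_zero]
  unfold cubeSumCDF
  rw [intervalIntegral.integral_div, intervalIntegral.integral_finsetSum]
  · simp_rw [intervalIntegral.integral_const_mul, hterm]
    rw [← sum_range_choose_mul_sub n fun k => truncPow (n + 1) (t - k), Nat.factorial_succ,
      Nat.cast_mul, Finset.sum_div, Finset.sum_div]
    refine Finset.sum_congr rfl fun k _ => ?_
    push_cast
    field_simp
  · exact fun k _ => (intervalIntegrable_truncPow_sub n k _ _).const_mul _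

lemma cubeSumCDF_nonneg (n : ℕ) (t : ℝ) : 0 ≤ cubeSumCDF n t := by
  induction n generalizing t with
  | zero => simpa [cubeSumCDF] using truncPow_nonneg 0 t
  | succ n ih =>
    rw [← integral_cubeSumCDF_sub]
    exact intervalIntegral.integral_nonneg zero_le_one fun a _ => ih _

lemma volume_eq_lintegral_volume_cons {n : ℕ} {A : Set (Fin (n + 1) → ℝ)}
    (hA : MeasurableSet A) :
    volume A = ∫⁻ a : ℝ, volume {y : Fin n → ℝ | Fin.cons a y ∈ A} := by
  have h := (volume_preserving_piFinSuccAbove (fun _ : Fin (n + 1) => ℝ) 0).symm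
  rw [← h.measure_preimage_equiv A, Measure.volume_eq_prod,
    Measure.prod_apply ((MeasurableEquiv.piFinSuccAbove (fun _ => ℝ) 0).symm.measurable hA)]
  refine lintegral_congr fun a => congrArg volume ?_
  ext y
  simp [MeasurableEquiv.piFinSuccAbove, Fin.consEquiv]

lemma measurableSet_cube_sum_mem {ι : Type*} [Fintype ι] {s : Set ℝ} (hs : MeasurableSet s) :
    MeasurableSet {x : ι → ℝ | (∀ i, x i ∈ Icc 0 1) ∧ ∑ i, x i ∈ s} := by
  rw [ofPred_and, ofPred_forall]
  exact (MeasurableSet.iInter fun i => measurable_pi_apply i measurableSet_Icc).inter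
    (hs.preimage (f := fun x : ι → ℝ => ∑ i, x i) (by fun_prop))

lemma measurableSet_cube_sum_le (n : ℕ) (t : ℝ) :
    MeasurableSet {x : Fin n → ℝ | (∀ i, x i ∈ Icc 0 1) ∧ ∑ i, x i ≤ t} :=
  measurableSet_cube_sum_mem (s := Iic t) measurableSet_Iic

lemma volume_cube_sum_le (n : ℕ) (t : ℝ) :
    volume {x : Fin n → ℝ | (∀ i, x i ∈ Icc 0 1) ∧ ∑ i, x i ≤ t} =
      ENNReal.ofReal (cubeSumCDF n t) := by
  induction n generalizing t with
  | zero => by_cases ht : 0 ≤ t <;> simp [ht, cubeSumCDF, truncPow, volume_pi]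
  | succ n ih =>
    have hslice : ∀ a, volume {y : Fin n → ℝ | Fin.cons a y ∈
        {x : Fin (n + 1) → ℝ | (∀ i, x i ∈ Icc 0 1) ∧ ∑ i, x i ≤ t}} =
        (Icc 0 1).indicator (fun a => ENNReal.ofReal (cubeSumCDF n (t - a))) a := fun a => by
      by_cases ha : a ∈ Icc (0 : ℝ) 1
      · simp only [indicator_of_mem ha, ← ih, mem_ofPred_eq, Fin.forall_fin_succ, Fin.cons_zero,
          Fin.cons_succ, Fin.sum_univ_succ, ha, true_and, le_sub_iff_add_le']
      · rw [indicator_of_notMem ha]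
        exact measure_mono_null (fun y hy => ha (hy.1 0)) measure_empty
    have hint : IntegrableOn (fun a => cubeSumCDF n (t - a)) (Icc 0 1) := by
      have := (intervalIntegrable_cubeSumCDF n (t - 0) (t - 1)).comp_sub_left t
      simp only [sub_sub_cancel] at this
      exact (intervalIntegrable_iff_integrableOn_Icc_of_le zero_le_one).1 this
    rw [volume_eq_lintegral_volume_cons (measurableSet_cube_sum_le _ t), lintegral_congr hslice,
      lintegral_indicator measurableSet_Icc, ← ofReal_integral_eq_lintegral_ofReal hint
        (ae_of_all _ fun a => cubeSumCDF_nonneg n _), integral_Icc_eq_integral_Ioc,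
      ← intervalIntegral.integral_of_le zero_le_one, integral_cubeSumCDF_sub]

lemma volume_setOf_sum_eq {ι : Type*} [Fintype ι] [Nonempty ι] (t : ℝ) :
    volume {x : ι → ℝ | ∑ i, x i = t} = 0 := by
  classical
  let L : (ι → ℝ) →ₗ[ℝ] ℝ := ∑ i, LinearMap.proj i
  let S := (affineSpan ℝ {t}).comap L.toAffineMap
  have hS : (S : Set (ι → ℝ)) = {x | ∑ i, x i = t} := by
    ext x
    simp [S, L]
  rw [← hS]
  refine Measure.addHaar_affineSubspace _ S fun h => ?_
  have hmem : Pi.single (Classical.arbitrary ι) (t + 1) ∈ (S : Set (ι → ℝ)) := by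
    rw [h]
    exact AffineSubspace.mem_top ℝ _ _
  simp [hS] at hmem

lemma volume_cube_sum_mem_Icc (n : ℕ) {a b : ℝ} (hab : a ≤ b) :
    volume {x : Fin (n + 1) → ℝ | (∀ i, x i ∈ Icc 0 1) ∧ ∑ i, x i ∈ Icc a b} =
      ENNReal.ofReal (cubeSumCDF (n + 1) b - cubeSumCDF (n + 1) a) := by
  have hdiff : {x : Fin (n + 1) → ℝ | (∀ i, x i ∈ Icc 0 1) ∧ ∑ i, x i ∈ Icc a b} \
      {x | ∑ i, x i = a} =
      {x | (∀ i, x i ∈ Icc 0 1) ∧ ∑ i, x i ≤ b} \ {x | (∀ i, x i ∈ Icc 0 1) ∧ ∑ i, x i ≤ a} := by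
    ext x
    simp only [mem_sdiff, mem_ofPred_eq, mem_Icc]
    constructor
    · rintro ⟨⟨hx, ha, hb⟩, hne⟩
      exact ⟨⟨hx, hb⟩, fun h => hne (le_antisymm h.2 ha)⟩
    · rintro ⟨⟨hx, hb⟩, hna⟩
      have : a < ∑ i, x i := lt_of_not_ge fun h => hna ⟨hx, h⟩
      exact ⟨⟨hx, this.le, hb⟩, this.ne'⟩
  have hsub : {x : Fin (n + 1) → ℝ | (∀ i, x i ∈ Icc 0 1) ∧ ∑ i, x i ≤ a} ⊆
      {x | (∀ i, x i ∈ Icc 0 1) ∧ ∑ i, x i ≤ b} := fun x hx => ⟨hx.1, hx.2.trans hab⟩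
  rw [← measure_sdiff_null (volume_setOf_sum_eq a), hdiff,
    measure_sdiff hsub (measurableSet_cube_sum_le _ a).nullMeasurableSet
      (by rw [volume_cube_sum_le]; exact ENNReal.ofReal_ne_top),
    volume_cube_sum_le, volume_cube_sum_le, ENNReal.ofReal_sub _ (cubeSumCDF_nonneg _ _)]

def reflect {ι : Type*} [DecidableEq ι] (s : Finset ι) (x : ι → ℝ) : ι → ℝ :=
  fun i => if i ∈ s then 1 - x i else x i

lemma volume_preserving_reflect {ι : Type*} [Fintype ι] [DecidableEq ι] (s : Finset ι) :
    MeasurePreserving (reflect s) := by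
  refine volume_preserving_pi (α' := fun _ : ι => ℝ) (β' := fun _ => ℝ)
    (f := fun i y => if i ∈ s then 1 - y else y) fun i => ?_
  split_ifs
  · exact Measure.measurePreserving_sub_left volume 1
  · exact MeasurePreserving.id volume

lemma reflect_mem_cube_iff {ι : Type*} [DecidableEq ι] (s : Finset ι) (x : ι → ℝ) :
    (∀ i, reflect s x i ∈ Icc 0 1) ↔ ∀ i, x i ∈ Icc 0 1 :=
  forall_congr' fun i => by
    unfold reflect
    split_ifs
    exacts [Icc.mem_iff_one_sub_mem.symm, Iff.rfl]

theorem stmt11 :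
    volume {x : Fin 5 → ℝ | (∀ i, x i ∈ Set.Icc (0 : ℝ) 1) ∧
        0 ≤ x 0 + x 1 + x 2 - x 3 - x 4 ∧ x 0 + x 1 + x 2 - x 3 - x 4 ≤ 1}
      = ENNReal.ofReal (11 / 20) := by
  have hsum : ∀ x : Fin 5 → ℝ,
      ∑ i, reflect {3, 4} x i = x 0 + x 1 + x 2 - x 3 - x 4 + 2 := fun x => by
    simp only [reflect, Fin.sum_univ_five, Finset.mem_insert, Finset.mem_singleton, Fin.reduceEq,
      or_self, or_false, or_true, ↓reduceIte]
    ring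
  have hreflect : {x : Fin 5 → ℝ | (∀ i, x i ∈ Set.Icc (0 : ℝ) 1) ∧
        0 ≤ x 0 + x 1 + x 2 - x 3 - x 4 ∧ x 0 + x 1 + x 2 - x 3 - x 4 ≤ 1} =
      reflect {3, 4} ⁻¹' {x | (∀ i, x i ∈ Icc 0 1) ∧ ∑ i, x i ∈ Icc 2 3} := by
    ext x
    simp only [mem_ofPred_eq, mem_preimage, reflect_mem_cube_iff, hsum]
    constructor <;> rintro ⟨hx, h0, h1⟩ <;> exact ⟨hx, by linarith, by linarith⟩
  have hvalue : cubeSumCDF 5 3 - cubeSumCDF 5 2 = 11 / 20 := by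
    norm_num [cubeSumCDF, truncPow, Finset.sum_range_succ, Nat.choose, Nat.factorial]
  rw [hreflect, (volume_preserving_reflect _).measure_preimage
    (measurableSet_cube_sum_mem measurableSet_Icc).nullMeasurableSet,
    volume_cube_sum_mem_Icc 4 (by norm_num), hvalue]
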